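/- Let I be a non-empty set. Then the bidual Banach algebra M_I(ℂ)** (with an Arens product) is strong pseudo-amenable if and only if I is finite. -/

import Mathlib

noncomputable section

open ContinuousLinearMap NormedSpace

/-- A directed index system for nets. -/
structure DirSys : Type 1 where
  ι : Type
  le : ι → ι → Prop
  refl : ∀ i, le i i
  trans : ∀ {i j k}, le i j → le j k → le i k
  nonempty : Nonempty ι
  directed : ∀ i j, ∃ k, le i k ∧ le j k

/-- Convergence of a net indexed by a directed system, in a (pseudo)metric space. -/
def DirSys.Tendsto (D : DirSys) {X : Type*} [PseudoMetricSpace X] (m : D.ι → X) (x : X) : Prop :=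
  ∀ ε : ℝ, 0 < ε → ∃ i, ∀ j, D.le i j → dist (m j) x < ε

variable (A : Type*) [NonUnitalNormedRing A] [NormedSpace ℂ A]
  [IsScalarTower ℂ A A] [SMulCommClass ℂ A A]

/-- The continuous bilinear forms on `A`, i.e. the dual space of the projective tensor
product `A ⊗̂ A`. -/
abbrev BilForms := A →L[ℂ] StrongDual ℂ A

/-- The bidual `(A ⊗̂ A)**` of the projective tensor product, realized concretely as the
dual space of the space of continuous bilinear forms on `A` (the latter being canonically,
isometrically, the dual of `A ⊗̂ A`). -/
abbrev TensorBidual := StrongDual ℂ (BilForms A)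

instance : NormedAddCommGroup (TensorBidual A) :=
  @ContinuousLinearMap.toNormedAddCommGroup ℂ ℂ (BilForms A) ℂ _ _ _ _ _ _ _ _

instance : NormedSpace ℂ (TensorBidual A) :=
  ContinuousLinearMap.toNormedSpace (𝕜 := ℂ) (𝕜₂ := ℂ) (E := BilForms A) (F := ℂ)
    (σ₁₂ := RingHom.id ℂ) (𝕜' := ℂ)

/-- The bidual `A**` of `A`. -/
abbrev Bidual := StrongDual ℂ (StrongDual ℂ A)

variable {A}

/-- The elementary tensor `x ⊗ y`, viewed inside `(A ⊗̂ A)**` via the canonical isometric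
embedding of `A ⊗̂ A` into its bidual. -/
def elemT (x y : A) : TensorBidual A :=
  (ContinuousLinearMap.apply ℂ ℂ y).comp (ContinuousLinearMap.apply ℂ (StrongDual ℂ A) x)

variable (A)

/-- The canonical isometric copy of `A ⊗̂ A` inside its bidual: the closure of the linear
span of the elementary tensors. -/
def ptp : Submodule ℂ (TensorBidual A) :=
  (Submodule.span ℂ {m : TensorBidual A | ∃ x y : A, m = elemT x y}).topologicalClosure

/-- The map `f ↦ f·a` on bilinear forms, `(f·a)(x,y) = f(ax, y)`; predual of the left
module action of `A` on `(A ⊗̂ A)**`. -/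
def leftBil (a : A) : BilForms A →L[ℂ] BilForms A :=
  (compL ℂ A A (StrongDual ℂ A)).flip (ContinuousLinearMap.mul ℂ A a)

/-- The map `f ↦ a·f` on bilinear forms, `(a·f)(x,y) = f(x, ya)`; predual of the right
module action of `A` on `(A ⊗̂ A)**`. -/
def rightBil (a : A) : BilForms A →L[ℂ] BilForms A :=
  compL ℂ A (StrongDual ℂ A) (StrongDual ℂ A)
    ((compL ℂ A A ℂ).flip ((ContinuousLinearMap.mul ℂ A).flip a))

variable {A}

/-- The left module action `a · m` of `A` on `(A ⊗̂ A)**`, extending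
`a · (x ⊗ y) = (a x) ⊗ y`. -/
def tsmulL (a : A) (m : TensorBidual A) : TensorBidual A := m.comp (leftBil A a)

/-- The right module action `m · a` of `A` on `(A ⊗̂ A)**`, extending
`(x ⊗ y) · a = x ⊗ (y a)`. -/
def tsmulR (a : A) (m : TensorBidual A) : TensorBidual A := m.comp (rightBil A a)

variable (A)

/-- The adjoint `π_A* : A* → (A ⊗̂ A)*` of the product morphism `π_A`, namely
`(π_A* f)(x, y) = f (x y)`. -/
def piStar : StrongDual ℂ A →L[ℂ] BilForms A :=
  ((compL ℂ A (A →L[ℂ] A) (StrongDual ℂ A)).flip (ContinuousLinearMap.mul ℂ A)).comp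
    (compL ℂ A A ℂ)

variable {A}

/-- The second adjoint `π_A** : (A ⊗̂ A)** → A**` of the product morphism. -/
def piSS (m : TensorBidual A) : Bidual A := m.comp (piStar A)

variable (A)

/-- The map `f ↦ f·a` on `A*`, `(f·a)(x) = f(ax)`. -/
def dualROp (a : A) : StrongDual ℂ A →L[ℂ] StrongDual ℂ A :=
  (compL ℂ A A ℂ).flip (ContinuousLinearMap.mul ℂ A a)

/-- The map `f ↦ a·f` on `A*`, `(a·f)(x) = f(xa)`. -/
def dualLOp (a : A) : StrongDual ℂ A →L[ℂ] StrongDual ℂ A :=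
  (compL ℂ A A ℂ).flip ((ContinuousLinearMap.mul ℂ A).flip a)

variable {A}

/-- The product `a · Φ` of `a ∈ A` and `Φ ∈ A**`: `(a·Φ)(f) = Φ(f·a)`. -/
def bsmulL (a : A) (Φ : Bidual A) : Bidual A := Φ.comp (dualROp A a)

/-- The product `Φ · a` of `Φ ∈ A**` and `a ∈ A`: `(Φ·a)(f) = Φ(a·f)`. -/
def bsmulR (a : A) (Φ : Bidual A) : Bidual A := Φ.comp (dualLOp A a)

/-- The canonical isometric embedding of `A` into its bidual. -/
def inclB (a : A) : Bidual A := NormedSpace.inclusionInDoubleDual ℂ A a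

variable (A)

/-- A Banach algebra `A` is *strong pseudo-amenable* if there is a (not necessarily bounded)
net `(m_α)` in `(A ⊗̂ A)**` such that `a·m_α − m_α·a → 0` and
`a·π_A**(m_α) = π_A**(m_α)·a → a` for every `a ∈ A`. -/
def StrongPseudoAmenable : Prop :=
  ∃ (D : DirSys) (m : D.ι → TensorBidual A),
    (∀ a : A, D.Tendsto (fun α => tsmulL a (m α) - tsmulR a (m α)) 0) ∧
    (∀ (a : A) (α : D.ι), bsmulL a (piSS (m α)) = bsmulR a (piSS (m α))) ∧
    (∀ a : A, D.Tendsto (fun α => bsmulR a (piSS (m α))) (inclB a))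

/-- A Banach algebra `A` is *pseudo-amenable* if there is a (not necessarily bounded)
net `(m_α)` in `A ⊗̂ A` such that `a·m_α − m_α·a → 0` and `π_A(m_α)a → a` for every `a ∈ A`. -/
def PseudoAmenable : Prop :=
  ∃ (D : DirSys) (m : D.ι → TensorBidual A),
    (∀ α, m α ∈ ptp A) ∧
    (∀ a : A, D.Tendsto (fun α => tsmulL a (m α) - tsmulR a (m α)) 0) ∧
    (∀ a : A, D.Tendsto (fun α => bsmulR a (piSS (m α))) (inclB a))

/-- A Banach algebra `A` is *pseudo-contractible* if there is a net `(m_α)` in `A ⊗̂ A`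
such that `a·m_α = m_α·a` and `π_A(m_α)a → a` for every `a ∈ A`. -/
def PseudoContractible : Prop :=
  ∃ (D : DirSys) (m : D.ι → TensorBidual A),
    (∀ α, m α ∈ ptp A) ∧
    (∀ (a : A) (α : D.ι), tsmulL a (m α) = tsmulR a (m α)) ∧
    (∀ a : A, D.Tendsto (fun α => bsmulR a (piSS (m α))) (inclB a))

/-- A Banach algebra `A` is *amenable* if it has a bounded approximate diagonal: a bounded
net `(m_α)` in `A ⊗̂ A` such that `a·m_α − m_α·a → 0` and `π_A(m_α)a → a` for every `a ∈ A`. -/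
def AmenableBanachAlgebra : Prop :=
  ∃ (D : DirSys) (m : D.ι → TensorBidual A) (C : ℝ),
    (∀ α, m α ∈ ptp A) ∧
    (∀ α, ‖m α‖ ≤ C) ∧
    (∀ a : A, D.Tendsto (fun α => tsmulL a (m α) - tsmulR a (m α)) 0) ∧
    (∀ a : A, D.Tendsto (fun α => bsmulR a (piSS (m α))) (inclB a))

end

/-- `(M, e)` is a realization of the Banach algebra `M_I(ℂ)` of `I × I` complex matrices
with finite `ℓ¹`-norm: the `e i j` are the standard matrix units `ε_{i,j}`, finite linear
combinations of them carry the `ℓ¹`-norm, and they have dense linear span. -/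
def IsMatrixUnitsL1 (I : Type) [DecidableEq I] (M : Type)
    [NonUnitalNormedRing M] [NormedSpace ℂ M] (e : I → I → M) : Prop :=
  (∀ i j k l : I, e i j * e k l = if j = k then e i l else 0) ∧
  (∀ (s : Finset (I × I)) (c : I × I → ℂ),
      ‖∑ p ∈ s, c p • e p.1 p.2‖ = ∑ p ∈ s, ‖c p‖) ∧
  ((Submodule.span ℂ (Set.range fun p : I × I => e p.1 p.2)).topologicalClosure = ⊤)

/-- The (first) Arens operation: for `Ψ ∈ A**` and `f ∈ A*`, the functional
`arensOp A Ψ f = Ψ · f ∈ A*` is given by `(Ψ · f)(x) = Ψ(f · x)` where `(f · x)(y) = f (x y)`.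
The first Arens product on the bidual `A**` is then `(Φ □ Ψ)(f) = Φ (arensOp A Ψ f)`,
that is, `Φ □ Ψ = Φ.comp (arensOp A Ψ)`. -/
noncomputable def arensOp (A : Type) [NonUnitalNormedRing A] [NormedSpace ℂ A] [IsScalarTower ℂ A A]
    [SMulCommClass ℂ A A] (Ψ : Bidual A) :
    StrongDual ℂ A →L[ℂ] StrongDual ℂ A :=
  (ContinuousLinearMap.compL ℂ A (StrongDual ℂ A) ℂ Ψ).comp (piStar A)

/-!
If `I` is finite, `M_I(ℂ)` is finite-dimensional, so `M_I(ℂ)** = M_I(ℂ)` is unital and has the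
central diagonal `∑ i, ε_{i i₀} ⊗ ε_{i₀ i}` with `π(∑ i, ε_{i i₀} ⊗ ε_{i₀ i}) = 1`; the constant
net at this diagonal witnesses strong pseudo-amenability.

Conversely, let `Φ = π**(m_α)`. Testing `ε_{ik} · Φ = Φ · ε_{ik}` against the coefficient
functional `ε*_{ik}` shows that `Φ` takes one common value `λ` on all `ε*_{ii}`, and
`Φ · ε_{i₀i₀} → ε_{i₀i₀}` makes `λ ≠ 0` for some `α`. As the norm is the `ℓ¹`-norm,
`‖∑ i ∈ s, ε*_{ii}‖ ≤ 1` for every finite `s`, so `#s · |λ| ≤ ‖Φ‖` and `I` is finite.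
-/

open NormedSpace Module Submodule

section L1Coordinates

variable {𝕜 X ι : Type*} [NontriviallyNormedField 𝕜] [NormedAddCommGroup X] [NormedSpace 𝕜 X]
  {v : ι → X}

theorem linearIndependent_of_norm_sum_smul_eq
    (hv : ∀ (s : Finset ι) (c : ι → 𝕜), ‖∑ p ∈ s, c p • v p‖ = ∑ p ∈ s, ‖c p‖) :
    LinearIndependent 𝕜 v := by
  refine linearIndependent_iff'.mpr fun s c hc p hp => norm_eq_zero.mp ?_
  have h := hv s c
  rw [hc, norm_zero, eq_comm, Finset.sum_eq_zero_iff_of_nonneg fun _ _ => norm_nonneg _] at h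
  exact h p hp

variable (hv : ∀ (s : Finset ι) (c : ι → 𝕜), ‖∑ p ∈ s, c p • v p‖ = ∑ p ∈ s, ‖c p‖)

theorem norm_coord_span_le (q : ι) (x : span 𝕜 (Set.range v)) :
    ‖(Basis.span (linearIndependent_of_norm_sum_smul_eq hv)).coord q x‖ ≤ 1 * ‖x‖ := by
  set b := Basis.span (linearIndependent_of_norm_sum_smul_eq hv)
  have hx : (x : X) = ∑ p ∈ (b.repr x).support, b.repr x p • v p := by
    conv_lhs => rw [← b.linearCombination_repr x]
    simp [Finsupp.linearCombination_apply, Finsupp.sum, b, Basis.span_apply]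
  rw [one_mul, ← norm_coe, hx, hv]
  by_cases hq : q ∈ (b.repr x).support
  · exact Finset.single_le_sum (f := fun p => ‖b.repr x p‖) (fun p _ => norm_nonneg _) hq
  · rw [Basis.coord_apply, Finsupp.notMem_support_iff.mp hq, norm_zero]
    positivity

variable [CompleteSpace 𝕜]

noncomputable def l1Coord (q : ι) : StrongDual 𝕜 X :=
  (((Basis.span (linearIndependent_of_norm_sum_smul_eq hv)).coord q).mkContinuous 1
    (norm_coord_span_le hv q)).extend (span 𝕜 (Set.range v)).subtypeL

variable [DecidableEq ι]

theorem l1Coord_apply (hd : Dense (span 𝕜 (Set.range v) : Set X)) (p q : ι) :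
    l1Coord hv q (v p) = if p = q then 1 else 0 := by
  set b := Basis.span (linearIndependent_of_norm_sum_smul_eq hv)
  have hp : (span 𝕜 (Set.range v)).subtypeL (b p) = v p :=
    congrArg Subtype.val (Basis.span_apply _ p)
  rw [← hp, l1Coord]
  rw [ContinuousLinearMap.extend_eq _ (by simpa [DenseRange] using hd.denseRange_val)
    isometry_subtype_coe.isUniformInducing]
  simp [b, Basis.coord_apply, Finsupp.single_apply]

theorem norm_sum_l1Coord_le (hd : Dense (span 𝕜 (Set.range v) : Set X)) (t : Finset ι) :
    ‖∑ q ∈ t, l1Coord hv q‖ ≤ 1 := by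
  refine ContinuousLinearMap.opNorm_le_bound _ zero_le_one fun x => ?_
  refine hd.induction (fun x hx => ?_)
    (isClosed_le (ContinuousLinearMap.continuous _).norm (continuous_const.mul continuous_norm)) x
  obtain ⟨c, rfl⟩ := Finsupp.mem_span_range_iff_exists_finsupp.mp hx
  have hsum : ∑ q ∈ t, l1Coord hv q (c.sum fun p a => a • v p) =
      ∑ p ∈ c.support, if p ∈ t then c p else 0 := by
    simp only [Finsupp.sum, map_sum, map_smul, l1Coord_apply hv hd, smul_eq_mul, mul_ite,
      mul_one, mul_zero]
    rw [Finset.sum_comm]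
    exact Finset.sum_congr rfl fun p _ => Finset.sum_ite_eq _ _ _
  rw [_root_.sum_apply, hsum, one_mul, Finsupp.sum, hv]
  refine (norm_sum_le _ _).trans (Finset.sum_le_sum fun p _ => ?_)
  split_ifs <;> simp

end L1Coordinates

theorem finite_of_apply_eq_of_norm_sum_le {𝕜 X I : Type*} [RCLike 𝕜]
    [SeminormedAddCommGroup X] [NormedSpace 𝕜 X] (Φ : StrongDual 𝕜 X) (f : I → X) {C : ℝ}
    (hC : ∀ s : Finset I, ‖∑ i ∈ s, f i‖ ≤ C) {c : 𝕜} (hc : c ≠ 0) (hΦ : ∀ i, Φ (f i) = c) :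
    Finite I := by
  by_contra hI
  rw [not_finite_iff_infinite] at hI
  obtain ⟨s, hs⟩ := Infinite.exists_subset_card_eq I (⌈‖Φ‖ * C / ‖c‖⌉₊ + 1)
  have hcard : (s.card : ℝ) * ‖c‖ ≤ ‖Φ‖ * C := calc
    (s.card : ℝ) * ‖c‖ = ‖Φ (∑ i ∈ s, f i)‖ := by
      simp [map_sum, hΦ]
    _ ≤ ‖Φ‖ * ‖∑ i ∈ s, f i‖ := Φ.le_opNorm _
    _ ≤ ‖Φ‖ * C := by gcongr; exact hC s
  have hlt : ‖Φ‖ * C / ‖c‖ < s.card := by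
    rw [hs]; push_cast; linarith [Nat.le_ceil (‖Φ‖ * C / ‖c‖)]
  rw [div_lt_iff₀ (norm_pos_iff.mpr hc)] at hlt
  linarith

namespace DirSys

def unit : DirSys where
  ι := PUnit
  le _ _ := True
  refl _ := trivial
  trans _ _ := trivial
  nonempty := ⟨PUnit.unit⟩
  directed _ _ := ⟨PUnit.unit, trivial, trivial⟩

theorem tendsto_const (D : DirSys) {X : Type*} [PseudoMetricSpace X] (x : X) :
    D.Tendsto (fun _ => x) x := fun ε hε =>
  ⟨D.nonempty.some, fun _ _ => by simpa using hε⟩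

end DirSys

section Actions

variable {A : Type*} [NonUnitalNormedRing A] [NormedSpace ℂ A]

theorem elemT_zero_left (y : A) : elemT (0 : A) y = 0 := by
  ext f; simp [elemT]

theorem elemT_zero_right (x : A) : elemT x (0 : A) = 0 := by
  ext f; simp [elemT]

variable [IsScalarTower ℂ A A] [SMulCommClass ℂ A A]

theorem tsmulL_elemT (a x y : A) : tsmulL a (elemT x y) = elemT (a * x) y := rfl

theorem tsmulR_elemT (a x y : A) : tsmulR a (elemT x y) = elemT x (y * a) := rfl

theorem piSS_elemT (x y : A) : piSS (elemT x y) = inclB (x * y) := rfl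

theorem bsmulL_inclB (a b : A) : bsmulL a (inclB b) = inclB (a * b) := rfl

theorem bsmulR_inclB (a b : A) : bsmulR a (inclB b) = inclB (b * a) := rfl

theorem tsmulL_sum {ι : Type*} (a : A) (s : Finset ι) (m : ι → TensorBidual A) :
    tsmulL a (∑ i ∈ s, m i) = ∑ i ∈ s, tsmulL a (m i) := by
  ext f; simp [tsmulL]

theorem tsmulR_sum {ι : Type*} (a : A) (s : Finset ι) (m : ι → TensorBidual A) :
    tsmulR a (∑ i ∈ s, m i) = ∑ i ∈ s, tsmulR a (m i) := by
  ext f; simp [tsmulR]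

theorem piSS_sum {ι : Type*} (s : Finset ι) (m : ι → TensorBidual A) :
    piSS (∑ i ∈ s, m i) = ∑ i ∈ s, piSS (m i) := by
  ext f; simp [piSS]

noncomputable def tsmulLLinearMap (m : TensorBidual A) : A →ₗ[ℂ] TensorBidual A where
  toFun a := tsmulL a m
  map_add' a b := by ext f; simp [tsmulL, leftBil]
  map_smul' c a := by ext f; simp [tsmulL, leftBil]

noncomputable def tsmulRLinearMap (m : TensorBidual A) : A →ₗ[ℂ] TensorBidual A where
  toFun a := tsmulR a m
  map_add' a b := by ext f; simp [tsmulR, rightBil]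
  map_smul' c a := by ext f; simp [tsmulR, rightBil]

theorem strongPseudoAmenable_of_diagonal (u : A) (hu_left : ∀ a, u * a = a)
    (hu_right : ∀ a, a * u = a) (m : TensorBidual A) (hm : ∀ a, tsmulL a m = tsmulR a m)
    (hπ : piSS m = inclB u) : StrongPseudoAmenable A := by
  refine ⟨DirSys.unit, fun _ => m, fun a => ?_, fun a _ => ?_, fun a => ?_⟩
  · simpa only [hm, sub_self] using DirSys.unit.tendsto_const (0 : TensorBidual A)
  · rw [hπ, bsmulL_inclB, bsmulR_inclB, hu_left, hu_right]
  · simpa only [hπ, bsmulR_inclB, hu_left] using DirSys.unit.tendsto_const (inclB a)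

theorem StrongPseudoAmenable.finite_of_matrixUnitFunctionals {I : Type*} (E : I → I → A)
    (F : I → I → StrongDual ℂ A) (hF_left : ∀ i k, dualROp A (E i k) (F i k) = F k k)
    (hF_right : ∀ i k, dualLOp A (E i k) (F i k) = F i i) (hF_diag : ∀ i, F i i (E i i) = 1)
    (hF_sum : ∀ s : Finset I, ‖∑ i ∈ s, F i i‖ ≤ 1) (h : StrongPseudoAmenable A) : Finite I := by
  obtain ⟨D, m, -, hcomm, hconv⟩ := h
  obtain _ | ⟨⟨i₀⟩⟩ := isEmpty_or_nonempty I
  · infer_instance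
  obtain ⟨α, hα⟩ := hconv (E i₀ i₀) 1 one_pos
  set Φ := piSS (m α)
  -- `a · Φ = Φ · a` for `a = E i k`, tested against `F i k`
  have hconst (i k : I) : Φ (F k k) = Φ (F i i) := by
    simpa only [bsmulL, bsmulR, ContinuousLinearMap.comp_apply, hF_left, hF_right] using
      congrArg (· (F i k)) (hcomm (E i k) α)
  have hne : Φ (F i₀ i₀) ≠ 0 := by
    intro h0
    have hF : ‖F i₀ i₀‖ ≤ 1 := by simpa using hF_sum {i₀}
    have : ‖(bsmulR (E i₀ i₀) Φ - inclB (E i₀ i₀)) (F i₀ i₀)‖ < 1 := calc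
      _ ≤ ‖bsmulR (E i₀ i₀) Φ - inclB (E i₀ i₀)‖ * ‖F i₀ i₀‖ := ContinuousLinearMap.le_opNorm _ _
      _ ≤ ‖bsmulR (E i₀ i₀) Φ - inclB (E i₀ i₀)‖ := mul_le_of_le_one_right (by positivity) hF
      _ < 1 := (dist_eq_norm (bsmulR (E i₀ i₀) Φ) (inclB (E i₀ i₀))).symm.trans_lt (hα α (D.refl α))
    simp [bsmulR, inclB, hF_right, h0, hF_diag] at this
  exact finite_of_apply_eq_of_norm_sum_le Φ (fun i => F i i) hF_sum hne (fun i => hconst i₀ i)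

end Actions

section MatrixUnits

variable {A : Type*} [NonUnitalNormedRing A] [NormedSpace ℂ A]
  [IsScalarTower ℂ A A] [SMulCommClass ℂ A A]

theorem strongPseudoAmenable_of_matrixUnits {I : Type*} [Fintype I] [DecidableEq I] [Nonempty I]
    (E : I → I → A) (hE : ∀ i j k l, E i j * E k l = if j = k then E i l else 0)
    (hspan : span ℂ (Set.range fun p : I × I => E p.1 p.2) = ⊤) :
    StrongPseudoAmenable A := by
  obtain ⟨i₀⟩ := ‹Nonempty I›
  have hu_left : LinearMap.mulLeft ℂ (∑ i, E i i) = LinearMap.id :=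
    LinearMap.ext_on_range hspan fun p => by simp [Finset.sum_mul, hE]
  have hu_right : LinearMap.mulRight ℂ (∑ i, E i i) = LinearMap.id :=
    LinearMap.ext_on_range hspan fun p => by simp [Finset.mul_sum, hE]
  set m := ∑ i, elemT (E i i₀) (E i₀ i)
  have hm : tsmulLLinearMap m = tsmulRLinearMap m := LinearMap.ext_on_range hspan fun p => by
    have hL (i : I) : tsmulL (E p.1 p.2) (elemT (E i i₀) (E i₀ i)) =
        if p.2 = i then elemT (E p.1 i₀) (E i₀ i) else 0 := by
      rw [tsmulL_elemT, hE]; split_ifs <;> simp [elemT_zero_left]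
    have hR (i : I) : tsmulR (E p.1 p.2) (elemT (E i i₀) (E i₀ i)) =
        if i = p.1 then elemT (E i i₀) (E i₀ p.2) else 0 := by
      rw [tsmulR_elemT, hE]; split_ifs <;> simp_all [elemT_zero_right]
    simp [m, tsmulLLinearMap, tsmulRLinearMap, tsmulL_sum, tsmulR_sum, hL, hR]
  refine strongPseudoAmenable_of_diagonal (∑ i, E i i) (LinearMap.congr_fun hu_left)
    (LinearMap.congr_fun hu_right) m (LinearMap.congr_fun hm) ?_
  simp [m, piSS_sum, piSS_elemT, hE, inclB]

end MatrixUnits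

theorem finrank_strongDual (𝕜 E : Type*) [RCLike 𝕜] [NormedAddCommGroup E] [NormedSpace 𝕜 E]
    [FiniteDimensional 𝕜 E] : finrank 𝕜 (StrongDual 𝕜 E) = finrank 𝕜 E :=
  LinearMap.toContinuousLinearMap.finrank_eq.symm.trans Subspace.dual_finrank_eq

theorem NormedSpace.inclusionInDoubleDual_surjective {𝕜 E : Type*} [RCLike 𝕜]
    [NormedAddCommGroup E] [NormedSpace 𝕜 E] [FiniteDimensional 𝕜 E] :
    Function.Surjective (inclusionInDoubleDual 𝕜 E) :=
  (LinearMap.injective_iff_surjective_of_finrank_eq_finrank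
    ((finrank_strongDual 𝕜 (StrongDual 𝕜 E)).trans (finrank_strongDual 𝕜 E)).symm
    (f := (inclusionInDoubleDual 𝕜 E).toLinearMap)).mp (inclusionInDoubleDualLi 𝕜).injective

section ArensBidual

variable {A B : Type} [NonUnitalNormedRing A] [NormedSpace ℂ A] [NonUnitalNormedRing B]
  [NormedSpace ℂ B] (j : Bidual A ≃ₗᵢ[ℂ] B)

noncomputable def evalAt (f : StrongDual ℂ A) : StrongDual ℂ B :=
  (inclusionInDoubleDual ℂ (StrongDual ℂ A) f).comp
    j.symm.toContinuousLinearEquiv.toContinuousLinearMap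

theorem evalAt_apply (f : StrongDual ℂ A) (b : B) : evalAt j f b = j.symm b f := rfl

theorem evalAt_sum {ι : Type*} (s : Finset ι) (f : ι → StrongDual ℂ A) :
    ∑ i ∈ s, evalAt j (f i) = evalAt j (∑ i ∈ s, f i) := by
  ext b; simp [evalAt_apply]

theorem norm_evalAt_le (f : StrongDual ℂ A) : ‖evalAt j f‖ ≤ ‖f‖ :=
  ContinuousLinearMap.opNorm_le_bound _ (norm_nonneg f) fun b => by
    rw [evalAt_apply, mul_comm, ← j.symm.norm_map b]
    exact (j.symm b).le_opNorm f

theorem evalAt_apply_inclB (f : StrongDual ℂ A) (a : A) : evalAt j f (j (inclB a)) = f a := by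
  rw [evalAt_apply, j.symm_apply_apply]; rfl

variable [IsScalarTower ℂ A A] [SMulCommClass ℂ A A]

theorem map_inclB_mul (hj : ∀ Φ Ψ : Bidual A, j.symm (j Φ * j Ψ) = Φ.comp (arensOp A Ψ))
    (a b : A) : j (inclB a) * j (inclB b) = j (inclB (a * b)) := by
  rw [← j.apply_symm_apply (j (inclB a) * j (inclB b)), hj]; rfl

variable [IsScalarTower ℂ B B] [SMulCommClass ℂ B B]

theorem dualROp_map_inclB_evalAt
    (hj : ∀ Φ Ψ : Bidual A, j.symm (j Φ * j Ψ) = Φ.comp (arensOp A Ψ))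
    (a : A) (f : StrongDual ℂ A) :
    dualROp B (j (inclB a)) (evalAt j f) = evalAt j (dualROp A a f) := by
  ext b
  conv_lhs => rw [← j.apply_symm_apply b]
  change (j.symm (j (inclB a) * j (j.symm b))) f = _
  rw [hj]; rfl

theorem dualLOp_map_inclB_evalAt
    (hj : ∀ Φ Ψ : Bidual A, j.symm (j Φ * j Ψ) = Φ.comp (arensOp A Ψ))
    (a : A) (f : StrongDual ℂ A) :
    dualLOp B (j (inclB a)) (evalAt j f) = evalAt j (dualLOp A a f) := by
  ext b
  conv_lhs => rw [← j.apply_symm_apply b]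
  change (j.symm (j (j.symm b) * j (inclB a))) f = _
  rw [hj]; rfl

end ArensBidual

namespace IsMatrixUnitsL1

variable {I M : Type} [DecidableEq I] [NonUnitalNormedRing M] [NormedSpace ℂ M]
  {e : I → I → M}

theorem dense (hM : IsMatrixUnitsL1 I M e) :
    Dense (span ℂ (Set.range fun p : I × I => e p.1 p.2) : Set M) :=
  dense_iff_topologicalClosure_eq_top.mpr hM.2.2

theorem span_eq_top [Finite I] (hM : IsMatrixUnitsL1 I M e) :
    span ℂ (Set.range fun p : I × I => e p.1 p.2) = ⊤ :=
  have := FiniteDimensional.span_of_finite ℂ (Set.finite_range fun p : I × I => e p.1 p.2)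
  (closed_of_finiteDimensional _).submodule_topologicalClosure_eq.symm.trans hM.2.2

section Coordinates

variable (hM : IsMatrixUnitsL1 I M e)

noncomputable def coord (i k : I) : StrongDual ℂ M := l1Coord hM.2.1 (i, k)

theorem coord_apply (i k a b : I) : hM.coord i k (e a b) = if a = i ∧ b = k then 1 else 0 := by
  simp [coord, l1Coord_apply hM.2.1 hM.dense (a, b) (i, k)]

theorem norm_sum_coord_le (s : Finset I) : ‖∑ i ∈ s, hM.coord i i‖ ≤ 1 := by
  have h := norm_sum_l1Coord_le hM.2.1 hM.dense
    (s.map ⟨fun i => (i, i), fun _ _ h => congrArg Prod.fst h⟩)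
  rwa [Finset.sum_map] at h

variable [IsScalarTower ℂ M M] [SMulCommClass ℂ M M]

theorem dualROp_coord (i k : I) : dualROp M (e i k) (hM.coord i k) = hM.coord k k := by
  refine ContinuousLinearMap.ext_on hM.dense ?_
  rintro _ ⟨⟨a, b⟩, rfl⟩
  change hM.coord i k (e i k * e a b) = hM.coord k k (e a b)
  rw [hM.1]
  split_ifs with h
  · simp [coord_apply, h]
  · simp [coord_apply, Ne.symm h]

theorem dualLOp_coord (i k : I) : dualLOp M (e i k) (hM.coord i k) = hM.coord i i := by
  refine ContinuousLinearMap.ext_on hM.dense ?_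
  rintro _ ⟨⟨a, b⟩, rfl⟩
  change hM.coord i k (e a b * e i k) = hM.coord i i (e a b)
  rw [hM.1]
  split_ifs with h
  · simp [coord_apply, h]
  · simp [coord_apply, h]

end Coordinates

variable [IsScalarTower ℂ M M] [SMulCommClass ℂ M M] {B : Type} [NonUnitalNormedRing B]
  [NormedSpace ℂ B] [IsScalarTower ℂ B B] [SMulCommClass ℂ B B] (j : Bidual M ≃ₗᵢ[ℂ] B)

theorem finite_of_strongPseudoAmenable (hM : IsMatrixUnitsL1 I M e)
    (hj : ∀ Φ Ψ : Bidual M, j.symm (j Φ * j Ψ) = Φ.comp (arensOp M Ψ))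
    (h : StrongPseudoAmenable B) : Finite I :=
  h.finite_of_matrixUnitFunctionals (fun i k => j (inclB (e i k)))
    (fun i k => evalAt j (hM.coord i k))
    (fun i k => by rw [dualROp_map_inclB_evalAt j hj, hM.dualROp_coord])
    (fun i k => by rw [dualLOp_map_inclB_evalAt j hj, hM.dualLOp_coord])
    (fun i => by simp [evalAt_apply_inclB, hM.coord_apply])
    (fun s => by rw [evalAt_sum]; exact (norm_evalAt_le j _).trans (hM.norm_sum_coord_le s))

theorem strongPseudoAmenable_of_finite [Finite I] [Nonempty I] (hM : IsMatrixUnitsL1 I M e)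
    (hj : ∀ Φ Ψ : Bidual M, j.symm (j Φ * j Ψ) = Φ.comp (arensOp M Ψ)) :
    StrongPseudoAmenable B := by
  have := Fintype.ofFinite I
  have hspan := hM.span_eq_top
  have : FiniteDimensional ℂ M := ⟨hspan ▸ fg_span (Set.finite_range _)⟩
  let ι : M →ₗ[ℂ] B := j.toLinearEquiv.toLinearMap ∘ₗ (inclusionInDoubleDual ℂ M).toLinearMap
  have hι : Function.Surjective ι := j.surjective.comp inclusionInDoubleDual_surjective
  refine strongPseudoAmenable_of_matrixUnits (fun i k => ι (e i k)) (fun i k i' k' => ?_) ?_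
  · change j (inclB _) * j (inclB _) = _
    rw [map_inclB_mul j hj, hM.1]
    split_ifs
    · rfl
    · exact map_zero ι
  · rw [Set.range_comp' ι, ← map_span, hspan, Submodule.map_top, LinearMap.range_eq_top.mpr hι]

end IsMatrixUnitsL1

/-- `B` is any Banach algebra isometrically isomorphic (via `j`) to the bidual of a realization
`M` of `M_I(ℂ)`, whose multiplication corresponds to the Arens product. -/
theorem strongPseudoAmenable_bidual_matrixAlgebra_iff_general
    (I : Type) [Nonempty I] [DecidableEq I]
    (M : Type) [NonUnitalNormedRing M] [NormedSpace ℂ M] [IsScalarTower ℂ M M]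
    [SMulCommClass ℂ M M]
    (e : I → I → M) (hM : IsMatrixUnitsL1 I M e)
    (B : Type) [NonUnitalNormedRing B] [NormedSpace ℂ B] [IsScalarTower ℂ B B]
    [SMulCommClass ℂ B B]
    (j : Bidual M ≃ₗᵢ[ℂ] B)
    (hj : ∀ Φ Ψ : Bidual M, j.symm (j Φ * j Ψ) = Φ.comp (arensOp M Ψ)) :
    StrongPseudoAmenable B ↔ Finite I :=
  ⟨hM.finite_of_strongPseudoAmenable j hj, fun _ => hM.strongPseudoAmenable_of_finite j hj⟩

/-- Let `I` be a non-empty set.  Then the bidual Banach algebra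
`M_I(ℂ)**` (with the Arens product) is strong pseudo-amenable if and only if `I` is
finite.  Here `B` is any Banach algebra isometrically isomorphic (via `j`) to the bidual
of a realization `M` of `M_I(ℂ)`, whose multiplication corresponds to the Arens product. -/
theorem strongPseudoAmenable_bidual_matrixAlgebra_iff
    (I : Type) [Nonempty I] [DecidableEq I]
    (M : Type) [NonUnitalNormedRing M] [NormedSpace ℂ M] [IsScalarTower ℂ M M]
    [SMulCommClass ℂ M M] [CompleteSpace M]
    (e : I → I → M) (hM : IsMatrixUnitsL1 I M e)
    (B : Type) [NonUnitalNormedRing B] [NormedSpace ℂ B] [IsScalarTower ℂ B B]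
    [SMulCommClass ℂ B B] [CompleteSpace B]
    (j : Bidual M ≃ₗᵢ[ℂ] B)
    (hj : ∀ Φ Ψ : Bidual M, j.symm (j Φ * j Ψ) = Φ.comp (arensOp M Ψ)) :
    StrongPseudoAmenable B ↔ Finite I :=
  strongPseudoAmenable_bidual_matrixAlgebra_iff_general I M e hM B j hj
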